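/- For the Korobov-kernel approximation problem, if g_k = 1 for all k, then the problem suffers from the curse of dimensionality. -/

import Mathlib

open Filter Real Set

/-- Information complexity: the number of multi-indices `(j₁,…,j_d) ∈ ℕ^d`
(here 0-indexed, so `Λ k j` stands for `λ(k+1, j+1)`) whose eigenvalue product exceeds `ε²`. -/
noncomputable def infoCount (Λ : ℕ → ℕ → ℝ) (d : ℕ) (ε : ℝ) : ℕ :=
  Nat.card {j : Fin d → ℕ | ε ^ 2 < ∏ k : Fin d, Λ k.val (j k)}

/-- Strong polynomial tractability. -/
def IsSPT (Λ : ℕ → ℕ → ℝ) : Prop :=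
  ∃ C p : ℝ, 0 ≤ C ∧ 0 ≤ p ∧ ∀ d : ℕ, 1 ≤ d → ∀ ε : ℝ, ε ∈ Set.Ioo (0 : ℝ) 1 →
    (infoCount Λ d ε : ℝ) ≤ C * ε ^ (-p)

/-- The exponent `p*` of strong polynomial tractability. -/
noncomputable def sptExponent (Λ : ℕ → ℕ → ℝ) : ℝ :=
  sInf {p : ℝ | 0 ≤ p ∧ ∃ C : ℝ, 0 ≤ C ∧ ∀ d : ℕ, 1 ≤ d → ∀ ε : ℝ, ε ∈ Set.Ioo (0 : ℝ) 1 →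
    (infoCount Λ d ε : ℝ) ≤ C * ε ^ (-p)}

/-- Polynomial tractability. -/
def IsPT (Λ : ℕ → ℕ → ℝ) : Prop :=
  ∃ C p q : ℝ, 0 ≤ C ∧ 0 ≤ p ∧ 0 ≤ q ∧ ∀ d : ℕ, 1 ≤ d → ∀ ε : ℝ, ε ∈ Set.Ioo (0 : ℝ) 1 →
    (infoCount Λ d ε : ℝ) ≤ C * (d : ℝ) ^ q * ε ^ (-p)

/-- Quasi-polynomial tractability. -/
def IsQPT (Λ : ℕ → ℕ → ℝ) : Prop :=
  ∃ C t : ℝ, 0 < C ∧ 0 < t ∧ ∀ d : ℕ, 1 ≤ d → ∀ ε : ℝ, ε ∈ Set.Ioo (0 : ℝ) 1 →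
    (infoCount Λ d ε : ℝ) ≤ C * Real.exp (t * (1 + Real.log d) * (1 + Real.log ε⁻¹))

/-- The exponent `t*` of quasi-polynomial tractability. -/
noncomputable def qptExponent (Λ : ℕ → ℕ → ℝ) : ℝ :=
  sInf {t : ℝ | 0 < t ∧ ∃ C : ℝ, 0 < C ∧ ∀ d : ℕ, 1 ≤ d → ∀ ε : ℝ, ε ∈ Set.Ioo (0 : ℝ) 1 →
    (infoCount Λ d ε : ℝ) ≤ C * Real.exp (t * (1 + Real.log d) * (1 + Real.log ε⁻¹))}

/-- The filter describing `ε⁻¹ + d → ∞` over pairs `(ε, d)` with `ε ∈ (0,1)` and `d ≥ 1`. -/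
noncomputable def wtFilter : Filter (ℝ × ℕ) :=
  (Filter.comap (fun p : ℝ × ℕ => p.1⁻¹ + (p.2 : ℝ)) Filter.atTop) ⊓
    Filter.principal {p : ℝ × ℕ | p.1 ∈ Set.Ioo (0 : ℝ) 1 ∧ 1 ≤ p.2}

/-- `(s,t)`-weak tractability: `ln n(ε,d) / (ε^{-s} + d^t) → 0` as `ε⁻¹ + d → ∞`. -/
def IsWT (Λ : ℕ → ℕ → ℝ) (s t : ℝ) : Prop :=
  Filter.Tendsto
    (fun p : ℝ × ℕ => Real.log (infoCount Λ p.2 p.1) / (p.1 ^ (-s) + (p.2 : ℝ) ^ t))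
    wtFilter (nhds 0)

/-- Uniform weak tractability. -/
def IsUWT (Λ : ℕ → ℕ → ℝ) : Prop := ∀ s t : ℝ, 0 < s → 0 < t → IsWT Λ s t

/-- The problem suffers from the curse of dimensionality. -/
def SuffersCurse (Λ : ℕ → ℕ → ℝ) : Prop :=
  ∃ C ε₀ α : ℝ, 0 < C ∧ 0 < ε₀ ∧ 0 < α ∧ ∀ ε : ℝ, 0 < ε → ε ≤ ε₀ →
    {d : ℕ | C * (1 + α) ^ d ≤ (infoCount Λ d ε : ℝ)}.Infinite

/-- Condition (3) of Property (P) for a given `τ > 0`: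
`H(k,τ) = ∑_{j≥2} (λ(k,j)/λ(k,2))^τ` is finite for each `k` and
`sup_k H(k,τ) = H(1,τ)` (equivalently `H(k,τ) ≤ H(1,τ)` for all `k`). -/
def Cond3 (Λ : ℕ → ℕ → ℝ) (τ : ℝ) : Prop :=
  0 < τ ∧ (∀ k, Summable fun j : ℕ => (Λ k (j + 1) / Λ k 1) ^ τ) ∧
    ∀ k, (∑' j : ℕ, (Λ k (j + 1) / Λ k 1) ^ τ) ≤ ∑' j : ℕ, (Λ 0 (j + 1) / Λ 0 1) ^ τ

/-- `τ₀`: the infimum of all `τ` satisfying Condition (3). -/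
noncomputable def tau0 (Λ : ℕ → ℕ → ℝ) : ℝ := sInf {τ : ℝ | Cond3 Λ τ}

/-- Property (P): each sequence `λ(k,·)` is nonincreasing and nonnegative with `λ(k,1) = 1`
and `λ(k,2) > 0`, `h_k = λ(k,2)` is nonincreasing, and Condition (3) holds for some `τ > 0`. -/
structure PropertyP (Λ : ℕ → ℕ → ℝ) : Prop where
  nonneg : ∀ k j, 0 ≤ Λ k j
  anti : ∀ k, Antitone (Λ k)
  first : ∀ k, Λ k 0 = 1
  second_pos : ∀ k, 0 < Λ k 1
  h_anti : Antitone fun k => Λ k 1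
  cond3 : ∃ τ : ℝ, Cond3 Λ τ


/-- Eigenvalues of the Korobov-kernel problem: `λ(k,1) = 1` and
`λ(k,2j) = λ(k,2j+1) = g_k j^{-2r_k}` for `j ≥ 1`
(0-indexed in both variables: `korobovLam g r k j = λ(k+1, j+1)`). -/
noncomputable def korobovLam (g r : ℕ → ℝ) (k j : ℕ) : ℝ :=
  if j = 0 then 1 else g k * (((j + 1) / 2 : ℕ) : ℝ) ^ (-(2 * r k))


/-! With `g ≡ 1` the eigenvalues `λ(k,1) = λ(k,2) = λ(k,3) = 1`, so all `3^d` multi-indices with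
entries in `{1,2,3}` have eigenvalue product `1 > ε²`, giving `n(ε,d) ≥ 3^d` for every `d`. Since
`r_k ≥ r_1 > 0`, each `λ(k,·)` tends to `0` while all eigenvalues are at most `1`, so the set
counted by `n(ε,d)` is finite; this matters, as `Nat.card` of an infinite set is `0`. -/

open Topology

theorem finite_setOf_lt_prod {ι : Type*} [Fintype ι] (f : ι → ℕ → ℝ) (hf0 : ∀ k j, 0 ≤ f k j)
    (hf1 : ∀ k j, f k j ≤ 1) (hlim : ∀ k, Tendsto (f k) atTop (𝓝 0)) {c : ℝ} (hc : 0 < c) :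
    {j : ι → ℕ | c < ∏ k, f k (j k)}.Finite := by
  have hfin : ∀ k, {n : ℕ | c < f k n}.Finite := fun k => by
    have hsmall : ∀ᶠ n in cofinite, f k n < c :=
      Nat.cofinite_eq_atTop ▸ (hlim k).eventually (gt_mem_nhds hc)
    exact (eventually_cofinite.1 hsmall).subset fun n hn => not_lt.2 hn.le
  refine (Set.Finite.pi fun k => hfin k).subset fun j hj k _ =>
    show c < f k (j k) from hj.trans_le ?_
  calc ∏ i, f i (j i) ≤ ∏ i ∈ {k}, f i (j i) :=
        Finset.prod_anti_set_of_le_one (fun i => hf0 i _) (fun i => hf1 i _)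
          (Finset.subset_univ _)
    _ = f k (j k) := Finset.prod_singleton _ _

theorem pow_le_infoCount (Λ : ℕ → ℕ → ℝ) {d m : ℕ} {ε : ℝ}
    (hfin : {j : Fin d → ℕ | ε ^ 2 < ∏ k : Fin d, Λ k.val (j k)}.Finite)
    (hone : ∀ k j, j < m → Λ k j = 1) (hε : ε ^ 2 < 1) :
    m ^ d ≤ infoCount Λ d ε := by
  have := hfin.to_subtype
  let embed : (Fin d → Fin m) → {j : Fin d → ℕ | ε ^ 2 < ∏ k : Fin d, Λ k.val (j k)} :=
    fun v => ⟨fun k => v k, by simpa [hone _ _ (v _).isLt] using hε⟩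
  have hembed : Function.Injective embed := fun v w h =>
    funext fun k => Fin.ext (congrFun (congrArg Subtype.val h) k)
  simpa only [infoCount, Nat.card_fun, Nat.card_fin] using
    Nat.card_le_card_of_injective embed hembed

theorem suffersCurse_of_pow_le_infoCount (Λ : ℕ → ℕ → ℝ) {m : ℕ} (hm : 2 ≤ m) {ε₀ : ℝ}
    (hε₀ : 0 < ε₀) (hle : ∀ ε, 0 < ε → ε ≤ ε₀ → ∀ d, m ^ d ≤ infoCount Λ d ε) :
    SuffersCurse Λ := by
  refine ⟨1, ε₀, m - 1, one_pos, hε₀, by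
    linarith [(Nat.ofNat_le_cast (α := ℝ)).2 hm], ?_⟩
  intro ε hε hεε₀
  convert Set.infinite_univ (α := ℕ)
  refine Set.eq_univ_of_forall fun d => ?_
  simpa using (Nat.cast_le (α := ℝ)).2 (hle ε hε hεε₀ d)

section Korobov

variable (g r : ℕ → ℝ)

theorem korobovLam_nonneg {k : ℕ} (hg : 0 ≤ g k) (j : ℕ) : 0 ≤ korobovLam g r k j := by
  unfold korobovLam
  split_ifs
  · exact zero_le_one
  · exact mul_nonneg hg (Real.rpow_nonneg (Nat.cast_nonneg _) _)

theorem korobovLam_le_one {k : ℕ} (hg : g k ≤ 1) (hr : 0 ≤ r k) (j : ℕ) :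
    korobovLam g r k j ≤ 1 := by
  unfold korobovLam
  split_ifs with hj
  · exact le_rfl
  · have hhalf : (1 : ℝ) ≤ ((j + 1) / 2 : ℕ) := by
      exact_mod_cast (by omega : 1 ≤ (j + 1) / 2)
    have hpow : (((j + 1) / 2 : ℕ) : ℝ) ^ (-(2 * r k)) ≤ 1 :=
      Real.rpow_le_one_of_one_le_of_nonpos hhalf (by linarith)
    exact mul_le_one₀ hg (Real.rpow_nonneg (Nat.cast_nonneg _) _) hpow

theorem korobovLam_of_lt_three {k : ℕ} (hg : g k = 1) {j : ℕ} (hj : j < 3) :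
    korobovLam g r k j = 1 := by
  interval_cases j <;> simp [korobovLam, hg]

theorem tendsto_korobovLam_atTop {k : ℕ} (hr : 0 < r k) :
    Tendsto (korobovLam g r k) atTop (𝓝 0) := by
  have hhalf : Tendsto (fun j : ℕ => (j + 1) / 2) atTop atTop :=
    tendsto_atTop_atTop.2 fun b => ⟨2 * b, fun j hj => by omega⟩
  have hpow : Tendsto (fun j : ℕ => (((j + 1) / 2 : ℕ) : ℝ) ^ (-(2 * r k))) atTop (𝓝 0) :=
    (tendsto_rpow_neg_atTop (by linarith)).comp (tendsto_natCast_atTop_atTop.comp hhalf)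
  have heq : (fun j : ℕ => g k * (((j + 1) / 2 : ℕ) : ℝ) ^ (-(2 * r k))) =ᶠ[atTop]
      korobovLam g r k :=
    eventually_atTop.2 ⟨1, fun j hj => by simp [korobovLam, Nat.one_le_iff_ne_zero.1 hj]⟩
  simpa using (hpow.const_mul (g k)).congr' heq

end Korobov

theorem korobov_curse_general (g r : ℕ → ℝ) (hr0 : 0 < r 0) (hrmono : Monotone r)
    (hgone : ∀ k : ℕ, g k = 1) :
    SuffersCurse (korobovLam g r) := by
  have hr : ∀ k, 0 < r k := fun k => hr0.trans_le (hrmono k.zero_le)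
  refine suffersCurse_of_pow_le_infoCount _ (m := 3) (by norm_num) one_half_pos
    fun ε hε hεhalf d => ?_
  have hε2 : ε ^ 2 < 1 := by nlinarith
  refine pow_le_infoCount _ ?_ (fun k j hj => korobovLam_of_lt_three g r (hgone k) hj) hε2
  exact finite_setOf_lt_prod (fun k : Fin d => korobovLam g r k)
    (fun k => korobovLam_nonneg g r (zero_le_one.trans (hgone k).ge))
    (fun k => korobovLam_le_one g r (hgone k).le (hr k).le)
    (fun k => tendsto_korobovLam_atTop g r (hr k)) (by positivity)

/-- Korobov kernels: if `g_k = 1` for all `k`, the problem suffers from the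
curse of dimensionality. -/
theorem korobov_curse (g r : ℕ → ℝ) (hg1 : g 0 ≤ 1) (hganti : Antitone g)
    (hgpos : ∀ k, 0 < g k) (hr0 : 0 < r 0) (hrmono : Monotone r)
    (hgone : ∀ k : ℕ, g k = 1) :
    SuffersCurse (korobovLam g r) :=
  korobov_curse_general g r hr0 hrmono hgone
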